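/- arXiv:1909.11131 — 3 statements merged into one kernel-verified Lean document; each statement's English description precedes it below -/
import Mathlib

section
/- For unitary operators U, V on a finite-dimensional complex Hilbert space, d(U,V) = 1 if and only if there exists a unit vector α such that Uα and Vα are orthogonal, where d(U,V) = sup_{‖ψ‖=1} (1 − |⟨ψ|U†V|ψ⟩|²)^{1/2}. -/
open Matrix

/-- The pseudometric `d_ψ(U,V) = (1 − |⟨ψ|U†V|ψ⟩|²)^{1/2}`. -/
noncomputable def dpsi {ι : Type*} [Fintype ι] (ψ : ι → ℂ) (U V : Matrix ι ι ℂ) : ℝ :=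
  Real.sqrt (1 - ‖star ψ ⬝ᵥ (Uᴴ * V).mulVec ψ‖ ^ 2)

/-- The distance `d(U,V) = sup_{‖ψ‖=1} (1 − |⟨ψ|U†V|ψ⟩|²)^{1/2}` on unitaries. -/
noncomputable def dU {ι : Type*} [Fintype ι] (U V : Matrix ι ι ℂ) : ℝ :=
  ⨆ ψ : {ψ : ι → ℂ // star ψ ⬝ᵥ ψ = 1}, dpsi ψ.1 U V

/-!
Each `d_ψ(U,V)` is at most `1`, with equality exactly when `⟨Uψ|Vψ⟩ = ⟨ψ|U†Vψ⟩` vanishes.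
Since `ψ ↦ d_ψ(U,V)` is continuous and the unit sphere of a finite-dimensional space is compact,
the supremum `d(U,V)` is attained, so it equals `1` iff some unit vector has `d_ψ(U,V) = 1`.
-/

section

variable {ι : Type*} [Fintype ι]

lemma star_dotProduct_self_eq_norm_sq (ψ : ι → ℂ) :
    star ψ ⬝ᵥ ψ = ((‖WithLp.toLp 2 ψ‖ ^ 2 : ℝ) : ℂ) := by
  rw [dotProduct_comm, ← EuclideanSpace.inner_toLp_toLp]
  simp

lemma isCompact_setOf_star_dotProduct_self_eq_one :
    IsCompact {ψ : ι → ℂ | star ψ ⬝ᵥ ψ = 1} := by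
  have hS : {ψ : ι → ℂ | star ψ ⬝ᵥ ψ = 1} =
      WithLp.ofLp '' Metric.sphere (0 : EuclideanSpace ℂ ι) 1 := by
    ext ψ
    rw [Set.mem_ofPred_eq, star_dotProduct_self_eq_norm_sq]
    constructor
    · intro h
      refine ⟨WithLp.toLp 2 ψ, ?_, rfl⟩
      rw [mem_sphere_zero_iff_norm]
      exact_mod_cast (pow_eq_one_iff_of_nonneg (norm_nonneg _) two_ne_zero).mp (by exact_mod_cast h)
    · rintro ⟨x, hx, rfl⟩
      simp [mem_sphere_zero_iff_norm.mp hx]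
  rw [hS]
  exact (isCompact_sphere 0 1).image (PiLp.continuous_ofLp 2 _)

lemma dpsi_le_one (ψ : ι → ℂ) (U V : Matrix ι ι ℂ) : dpsi ψ U V ≤ 1 :=
  Real.sqrt_le_one.mpr (by linarith [sq_nonneg ‖star ψ ⬝ᵥ (Uᴴ * V) *ᵥ ψ‖])

lemma star_mulVec_dotProduct_mulVec (U V : Matrix ι ι ℂ) (ψ : ι → ℂ) :
    star (U *ᵥ ψ) ⬝ᵥ V *ᵥ ψ = star ψ ⬝ᵥ (Uᴴ * V) *ᵥ ψ := by
  rw [star_mulVec, dotProduct_mulVec, dotProduct_mulVec, vecMul_vecMul]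

lemma dpsi_eq_one_iff (ψ : ι → ℂ) (U V : Matrix ι ι ℂ) :
    dpsi ψ U V = 1 ↔ star (U *ᵥ ψ) ⬝ᵥ V *ᵥ ψ = 0 := by
  simp [dpsi, star_mulVec_dotProduct_mulVec]

lemma continuous_dpsi (U V : Matrix ι ι ℂ) : Continuous fun ψ : ι → ℂ ↦ dpsi ψ U V := by
  unfold dpsi
  fun_prop

lemma dpsi_le_dU {ψ : ι → ℂ} (hψ : star ψ ⬝ᵥ ψ = 1) (U V : Matrix ι ι ℂ) :
    dpsi ψ U V ≤ dU U V :=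
  le_ciSup (f := fun ψ : {ψ : ι → ℂ // star ψ ⬝ᵥ ψ = 1} ↦ dpsi ψ.1 U V)
    ⟨1, Set.forall_mem_range.mpr fun _ ↦ dpsi_le_one _ _ _⟩ ⟨ψ, hψ⟩

lemma exists_dpsi_eq_dU (hS : {ψ : ι → ℂ | star ψ ⬝ᵥ ψ = 1}.Nonempty) (U V : Matrix ι ι ℂ) :
    ∃ ψ, star ψ ⬝ᵥ ψ = 1 ∧ dpsi ψ U V = dU U V := by
  obtain ⟨α, hα, hmax⟩ :=
    isCompact_setOf_star_dotProduct_self_eq_one.exists_isMaxOn hS (continuous_dpsi U V).continuousOn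
  have : Nonempty {ψ : ι → ℂ // star ψ ⬝ᵥ ψ = 1} := ⟨⟨α, hα⟩⟩
  exact ⟨α, hα, le_antisymm (dpsi_le_dU hα U V) (ciSup_le fun ψ ↦ hmax ψ.2)⟩

lemma dU_le_one (U V : Matrix ι ι ℂ) : dU U V ≤ 1 :=
  Real.iSup_le (fun _ ↦ dpsi_le_one _ _ _) zero_le_one

lemma dU_eq_zero_of_eq_empty (h : {ψ : ι → ℂ | star ψ ⬝ᵥ ψ = 1} = ∅) (U V : Matrix ι ι ℂ) :
    dU U V = 0 :=
  have : IsEmpty {ψ : ι → ℂ // star ψ ⬝ᵥ ψ = 1} := ⟨fun ψ ↦ h.subset ψ.2⟩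
  Real.iSup_of_isEmpty _

end

theorem dU_eq_one_iff_general {n : ℕ} (U V : Matrix (Fin n) (Fin n) ℂ) :
    dU U V = 1 ↔
      ∃ α : Fin n → ℂ, star α ⬝ᵥ α = 1 ∧ star (U.mulVec α) ⬝ᵥ (V.mulVec α) = 0 := by
  constructor
  · intro h
    have hS : {ψ : Fin n → ℂ | star ψ ⬝ᵥ ψ = 1}.Nonempty := by
      by_contra! hS
      exact one_ne_zero (h.symm.trans (dU_eq_zero_of_eq_empty hS U V))
    obtain ⟨α, hα, hαU⟩ := exists_dpsi_eq_dU hS U V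
    exact ⟨α, hα, (dpsi_eq_one_iff α U V).mp (hαU.trans h)⟩
  · rintro ⟨α, hα, horth⟩
    exact le_antisymm (dU_le_one U V) ((dpsi_eq_one_iff α U V).mpr horth ▸ dpsi_le_dU hα U V)

theorem dU_eq_one_iff {n : ℕ} (U V : Matrix (Fin n) (Fin n) ℂ)
    (hU : U ∈ Matrix.unitaryGroup (Fin n) ℂ) (hV : V ∈ Matrix.unitaryGroup (Fin n) ℂ) :
    dU U V = 1 ↔
      ∃ α : Fin n → ℂ, star α ⬝ᵥ α = 1 ∧ star (U.mulVec α) ⬝ᵥ (V.mulVec α) = 0 :=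
  dU_eq_one_iff_general U V
end

section
/- Let W be a unitary operator on ℂⁿ whose eigenvalues are e^{iθ₁}, …, e^{iθₙ} with 0 = θ₁ ≤ θ₂ ≤ … ≤ θₙ < π (all eigenvalues contained in the open upper half-plane arc of angular width θₙ < π starting at 1). Then d(I, W) = sin(θₙ/2), where d(I,W) = sup_{‖ψ‖=1} (1 − |⟨ψ|W|ψ⟩|²)^{1/2}. -/
/-!
Writing `ψ = P c`, the value `⟨ψ|W|ψ⟩ = ∑ |c_j|² e^{iθ_j}` ranges exactly over the convex hull
of the eigenvalues. These lie on the arc from `1` to `e^{iθₙ}`; after rotating by `e^{-iθₙ/2}`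
every eigenvalue has real part at least `cos (θₙ/2)`, hence so does every convex combination,
and the midpoint `(1 + e^{iθₙ})/2` of the chord has modulus exactly `cos (θₙ/2)`. So the
supremum of `√(1 - |⟨ψ|W|ψ⟩|²)` is `√(1 - cos² (θₙ/2)) = sin (θₙ/2)`, and it is attained.
-/

open Matrix

open Complex Real

lemma norm_one_add_exp_mul_I_div_two (α : ℝ) :
    ‖(1 + exp (α * I)) / 2‖ = |Real.cos (α / 2)| := by
  have hfactor : (1 + exp (α * I)) / 2 = exp ((α / 2 : ℝ) * I) * Real.cos (α / 2) := by
    rw [ofReal_cos, Complex.cos, mul_div, mul_add, ← Complex.exp_add, ← Complex.exp_add]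
    push_cast; ring_nf; rw [Complex.exp_zero]; ring
  rw [hfactor, norm_mul, norm_exp_ofReal_mul_I, one_mul, norm_real, Real.norm_eq_abs]

section

variable {ι : Type*} [Fintype ι]

lemma star_dotProduct_self_eq_sum_normSq (v : ι → ℂ) :
    star v ⬝ᵥ v = ∑ j, (normSq (v j) : ℂ) := by
  simp [dotProduct, normSq_eq_conj_mul_self]

lemma cos_half_le_norm_sum_exp {p : ι → ℝ} (hp : p ∈ stdSimplex ℝ ι)
    {θ : ι → ℝ} {α : ℝ} (hθ : ∀ j, θ j ∈ Set.Icc 0 α) (hα : α ≤ 2 * π) :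
    Real.cos (α / 2) ≤ ‖∑ j, (p j : ℂ) * exp (θ j * I)‖ := by
  have hterm : ∀ j, (exp ((-(α / 2) : ℝ) * I) * ((p j : ℂ) * exp (θ j * I))).re =
      p j * Real.cos (θ j - α / 2) := fun j => by
    rw [mul_left_comm, ← Complex.exp_add,
      show ((-(α / 2) : ℝ) : ℂ) * I + θ j * I = (θ j - α / 2 : ℝ) * I by push_cast; ring,
      re_ofReal_mul, exp_ofReal_mul_I_re]
  have hcos : ∀ j, Real.cos (α / 2) ≤ Real.cos (θ j - α / 2) := fun j => by
    rw [← Real.cos_abs (θ j - α / 2)]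
    exact Real.cos_le_cos_of_nonneg_of_le_pi (abs_nonneg _) (by linarith)
      (abs_le.mpr ⟨by linarith [(hθ j).1], by linarith [(hθ j).2]⟩)
  calc Real.cos (α / 2) = ∑ j, p j * Real.cos (α / 2) := by
        rw [← Finset.sum_mul, hp.2, one_mul]
    _ ≤ ∑ j, p j * Real.cos (θ j - α / 2) :=
      Finset.sum_le_sum fun j _ => mul_le_mul_of_nonneg_left (hcos j) (hp.1 j)
    _ = (exp ((-(α / 2) : ℝ) * I) * ∑ j, (p j : ℂ) * exp (θ j * I)).re := by
      simp only [Finset.mul_sum, re_sum, hterm]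
    _ ≤ ‖exp ((-(α / 2) : ℝ) * I) * ∑ j, (p j : ℂ) * exp (θ j * I)‖ := re_le_norm _
    _ = ‖∑ j, (p j : ℂ) * exp (θ j * I)‖ := by rw [norm_mul, norm_exp_ofReal_mul_I, one_mul]

variable [DecidableEq ι]

lemma dpsi_one_left (ψ : ι → ℂ) (V : Matrix ι ι ℂ) :
    dpsi ψ 1 V = √(1 - ‖star ψ ⬝ᵥ V *ᵥ ψ‖ ^ 2) := by
  simp [dpsi]

lemma star_dotProduct_conjTranspose_mulVec_self {P : Matrix ι ι ℂ}
    (hP : P ∈ unitaryGroup ι ℂ) (ψ : ι → ℂ) :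
    star (Pᴴ *ᵥ ψ) ⬝ᵥ Pᴴ *ᵥ ψ = star ψ ⬝ᵥ ψ := by
  rw [star_mulVec, conjTranspose_conjTranspose, ← dotProduct_mulVec, mulVec_mulVec,
    show P * Pᴴ = 1 from mem_unitaryGroup_iff.mp hP, one_mulVec]

lemma star_dotProduct_conj_diagonal_mulVec (P : Matrix ι ι ℂ) (d ψ : ι → ℂ) :
    star ψ ⬝ᵥ (P * diagonal d * Pᴴ) *ᵥ ψ = ∑ j, (normSq ((Pᴴ *ᵥ ψ) j) : ℂ) * d j := by
  rw [← mulVec_mulVec, ← mulVec_mulVec, dotProduct_mulVec,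
    show star ψ ᵥ* P = star (Pᴴ *ᵥ ψ) by rw [star_mulVec, conjTranspose_conjTranspose]]
  simp [dotProduct, mulVec_diagonal, normSq_eq_conj_mul_self, mul_comm, mul_assoc]

theorem numericalRange_unitary_conj_diagonal {P : Matrix ι ι ℂ} (hP : P ∈ unitaryGroup ι ℂ)
    (d : ι → ℂ) :
    {z | ∃ ψ : ι → ℂ, star ψ ⬝ᵥ ψ = 1 ∧ star ψ ⬝ᵥ (P * diagonal d * Pᴴ) *ᵥ ψ = z} =
      (fun p : ι → ℝ => ∑ j, (p j : ℂ) * d j) '' stdSimplex ℝ ι := by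
  ext z
  constructor
  · rintro ⟨ψ, hψ, rfl⟩
    refine ⟨fun j => normSq ((Pᴴ *ᵥ ψ) j), ⟨fun j => normSq_nonneg _, ?_⟩,
      (star_dotProduct_conj_diagonal_mulVec P d ψ).symm⟩
    have hsum := (star_dotProduct_self_eq_sum_normSq _).symm.trans
      ((star_dotProduct_conjTranspose_mulVec_self hP ψ).trans hψ)
    exact_mod_cast hsum
  · rintro ⟨p, ⟨hp0, hp1⟩, rfl⟩
    set c : ι → ℂ := fun j => (√(p j) : ℂ)
    have hc : Pᴴ *ᵥ (P *ᵥ c) = c := by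
      rw [mulVec_mulVec, show Pᴴ * P = 1 from mem_unitaryGroup_iff'.mp hP, one_mulVec]
    have hnormSq : ∀ j, normSq (c j) = p j := fun j => by
      simp [c, normSq_ofReal, mul_self_sqrt (hp0 j)]
    refine ⟨P *ᵥ c, ?_, ?_⟩
    · rw [← star_dotProduct_conjTranspose_mulVec_self hP, hc,
        star_dotProduct_self_eq_sum_normSq]
      simp only [hnormSq]
      exact_mod_cast hp1
    · simp only [star_dotProduct_conj_diagonal_mulVec, hc, hnormSq]

lemma add_div_two_mem_image_stdSimplex (d : ι → ℂ) (a b : ι) :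
    (d a + d b) / 2 ∈ (fun p : ι → ℝ => ∑ j, (p j : ℂ) * d j) '' stdSimplex ℝ ι := by
  refine ⟨(1 / 2 : ℝ) • Pi.single a 1 + (1 / 2 : ℝ) • Pi.single b 1,
    convex_stdSimplex ℝ ι (single_mem_stdSimplex ℝ a) (single_mem_stdSimplex ℝ b)
      (by norm_num) (by norm_num) (by norm_num), ?_⟩
  simp [Pi.single_apply, add_mul, Finset.sum_add_distrib, apply_ite (fun x : ℝ => (x : ℂ)),
    ite_mul]
  ring

end

theorem dU_one_eq_sin_half {n : ℕ} (W : Matrix (Fin (n + 1)) (Fin (n + 1)) ℂ)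
    (P : Matrix (Fin (n + 1)) (Fin (n + 1)) ℂ)
    (hP : P ∈ Matrix.unitaryGroup (Fin (n + 1)) ℂ)
    (θ : Fin (n + 1) → ℝ) (hmono : Monotone θ) (hθ0 : θ 0 = 0)
    (hθlt : θ (Fin.last n) < Real.pi)
    (hW : W = P * Matrix.diagonal (fun i => Complex.exp (θ i * Complex.I)) * Pᴴ) :
    dU 1 W = Real.sin (θ (Fin.last n) / 2) := by
  set α := θ (Fin.last n)
  have hθ : ∀ j, θ j ∈ Set.Icc 0 α := fun j =>
    ⟨hθ0 ▸ hmono (Fin.zero_le j), hmono (Fin.le_last j)⟩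
  have hα : 0 ≤ α := (hθ (Fin.last n)).1
  have hsin : Real.sin (α / 2) = √(1 - Real.cos (α / 2) ^ 2) :=
    sin_eq_sqrt_one_sub_cos_sq (by linarith) (by linarith [pi_pos])
  have hrange := numericalRange_unitary_conj_diagonal hP (fun i => exp (θ i * I))
  rw [← hW, Set.ext_iff] at hrange
  have hle : ∀ ψ : {ψ : Fin (n + 1) → ℂ // star ψ ⬝ᵥ ψ = 1},
      dpsi ψ.1 1 W ≤ Real.sin (α / 2) := by
    rintro ⟨ψ, hψ⟩
    obtain ⟨p, hp, hz⟩ := (hrange _).1 ⟨ψ, hψ, rfl⟩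
    rw [dpsi_one_left, hsin, ← hz]
    gcongr
    · exact cos_nonneg_of_mem_Icc ⟨by linarith [pi_pos], by linarith⟩
    · exact cos_half_le_norm_sum_exp hp hθ (by linarith [pi_pos])
  obtain ⟨ψ, hψ, hz⟩ := (hrange ((1 + exp (α * I)) / 2)).2 <| by
    simpa [hθ0] using add_div_two_mem_image_stdSimplex (fun i => exp (θ i * I)) 0 (Fin.last n)
  have hψmax : dpsi ψ 1 W = Real.sin (α / 2) := by
    rw [dpsi_one_left, hz, hsin, norm_one_add_exp_mul_I_div_two, sq_abs]
  have : Nonempty {ψ : Fin (n + 1) → ℂ // star ψ ⬝ᵥ ψ = 1} := ⟨⟨ψ, hψ⟩⟩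
  exact le_antisymm (ciSup_le hle)
    (le_ciSup_of_le ⟨_, Set.forall_mem_range.2 hle⟩ ⟨ψ, hψ⟩ hψmax.ge)
end

section
/- Let U be a unitary operator on ℂᵐ⊗ℂⁿ such that for every pair of unit vectors α ∈ ℂᵐ, β ∈ ℂⁿ the product vector α⊗β is an eigenvector of U. Then U is a scalar multiple of the identity: U = aI for some complex a with |a| = 1. -/
/-!
A product of nonzero vectors is a multiple of a product of unit vectors, so every product vector
is an eigenvector of `U`. The products `eᵢ ⊗ eⱼ` of standard basis vectors make `U` diagonal,
and the product `𝟙 ⊗ 𝟙` of all-ones vectors then forces its diagonal entries to agree.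
-/

open Matrix
open scoped ComplexOrder

section prodVec

variable {R ι κ : Type*}

def prodVec [Mul R] (α : ι → R) (β : κ → R) : ι × κ → R :=
  fun p => α p.1 * β p.2

theorem prodVec_zero_left [MulZeroClass R] (β : κ → R) : prodVec (0 : ι → R) β = 0 := by
  ext p
  simp [prodVec]

theorem prodVec_zero_right [MulZeroClass R] (α : ι → R) : prodVec α (0 : κ → R) = 0 := by
  ext p
  simp [prodVec]

theorem prodVec_one [MulOneClass R] : prodVec (1 : ι → R) (1 : κ → R) = 1 := by
  ext p
  simp [prodVec]

theorem prodVec_smul_smul [CommMonoid R] (r s : R) (α : ι → R) (β : κ → R) :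
    prodVec (r • α) (s • β) = (r * s) • prodVec α β := by
  ext p
  simp only [prodVec, Pi.smul_apply, smul_eq_mul, mul_mul_mul_comm]

theorem prodVec_single_one [MulZeroOneClass R] [DecidableEq ι] [DecidableEq κ] (i : ι) (j : κ) :
    prodVec (Pi.single i (1 : R)) (Pi.single j 1) = Pi.single (i, j) 1 := by
  ext ⟨i', j'⟩
  by_cases hi : i' = i <;> by_cases hj : j' = j <;> simp [prodVec, hi, hj]

end prodVec

theorem exists_eq_smul_normalized {𝕜 ι : Type*} [RCLike 𝕜] [Fintype ι]
    {v : ι → 𝕜} (hv : v ≠ 0) :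
    ∃ (r : 𝕜) (u : ι → 𝕜), star u ⬝ᵥ u = 1 ∧ v = r • u := by
  obtain ⟨s, hs, hsv⟩ := RCLike.pos_iff_exists_ofReal.mp (dotProduct_star_self_pos_iff.mpr hv)
  have hr : ((√s : ℝ) : 𝕜) ≠ 0 := by exact_mod_cast (Real.sqrt_pos.mpr hs).ne'
  refine ⟨√s, (√s : 𝕜)⁻¹ • v, ?_, by rw [smul_inv_smul₀ hr]⟩
  rw [star_smul, smul_dotProduct, dotProduct_smul, ← hsv, star_inv₀, RCLike.star_def,
    RCLike.conj_ofReal, smul_eq_mul, smul_eq_mul, ← mul_assoc, ← mul_inv, ← RCLike.ofReal_mul,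
    Real.mul_self_sqrt hs.le, inv_mul_cancel₀ (by exact_mod_cast hs.ne')]

theorem exists_mulVec_prodVec_eq_smul {𝕜 ι κ : Type*} [RCLike 𝕜] [Fintype ι] [Fintype κ]
    (A : Matrix (ι × κ) (ι × κ) 𝕜)
    (h : ∀ (α : ι → 𝕜) (β : κ → 𝕜), star α ⬝ᵥ α = 1 → star β ⬝ᵥ β = 1 →
      ∃ c : 𝕜, A *ᵥ prodVec α β = c • prodVec α β)
    (α : ι → 𝕜) (β : κ → 𝕜) : ∃ c : 𝕜, A *ᵥ prodVec α β = c • prodVec α β := by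
  by_cases hα : α = 0
  · exact ⟨0, by simp [hα, prodVec_zero_left]⟩
  by_cases hβ : β = 0
  · exact ⟨0, by simp [hβ, prodVec_zero_right]⟩
  obtain ⟨r, u, hu, rfl⟩ := exists_eq_smul_normalized hα
  obtain ⟨s, w, hw, rfl⟩ := exists_eq_smul_normalized hβ
  obtain ⟨c, hc⟩ := h u w hu hw
  exact ⟨c, by rw [prodVec_smul_smul, mulVec_smul, hc, smul_comm]⟩

theorem Matrix.eq_smul_one_of_mulVec_single_of_mulVec_one {R ι : Type*} [CommSemiring R]
    [Fintype ι] [DecidableEq ι] (A : Matrix ι ι R)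
    (hsingle : ∀ k, ∃ d : R, A *ᵥ Pi.single k 1 = d • Pi.single k 1) {c : R}
    (hone : A *ᵥ 1 = c • 1) : A = c • 1 := by
  choose d hd using hsingle
  have hA : A = diagonal d := ext_of_mulVec_single fun k => by
    rw [hd k, diagonal_mulVec_single, mul_one, ← Pi.single_smul, smul_eq_mul, mul_one]
  have hd : d = fun _ => c := by
    ext k
    simpa [hA, mulVec_diagonal] using congrFun hone k
  rw [hA, hd, smul_one_eq_diagonal]

theorem Matrix.norm_eq_one_of_smul_one_mem_unitaryGroup {𝕜 ι : Type*} [RCLike 𝕜] [Fintype ι]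
    [DecidableEq ι] [Nonempty ι] {c : 𝕜} (hc : c • (1 : Matrix ι ι 𝕜) ∈ unitaryGroup ι 𝕜) :
    ‖c‖ = 1 := by
  refine CStarRing.norm_of_mem_unitary (Unitary.mem_iff_self_mul_star.mpr ?_)
  obtain ⟨k⟩ := ‹Nonempty ι›
  simpa [star_smul, Matrix.smul_apply] using congrFun (congrFun hc.1 k) k

theorem unitary_scalar_of_product_eigenvectors {m n : ℕ}
    (U : Matrix (Fin m × Fin n) (Fin m × Fin n) ℂ)
    (hU : U ∈ Matrix.unitaryGroup (Fin m × Fin n) ℂ)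
    (h : ∀ (α : Fin m → ℂ) (β : Fin n → ℂ), star α ⬝ᵥ α = 1 → star β ⬝ᵥ β = 1 →
      ∃ c : ℂ, U.mulVec (fun p => α p.1 * β p.2) = c • fun p => α p.1 * β p.2) :
    ∃ a : ℂ, ‖a‖ = 1 ∧ U = a • (1 : Matrix (Fin m × Fin n) (Fin m × Fin n) ℂ) := by
  have hprod := exists_mulVec_prodVec_eq_smul U h
  cases isEmpty_or_nonempty (Fin m × Fin n)
  · exact ⟨1, norm_one, Subsingleton.elim _ _⟩
  obtain ⟨a, ha⟩ := hprod 1 1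
  have hUa : U = a • 1 := U.eq_smul_one_of_mulVec_single_of_mulVec_one
    (fun k => prodVec_single_one (R := ℂ) k.1 k.2 ▸ hprod (Pi.single k.1 1) (Pi.single k.2 1))
    (prodVec_one (R := ℂ) ▸ ha)
  exact ⟨a, norm_eq_one_of_smul_one_mem_unitaryGroup (hUa ▸ hU), hUa⟩
end
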